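/- Let G be a group with a convergence group action on a compact metrizable space M with at least three points, let H and J be infinite subgroups of G, and let z ∈ Λ(H) ∩ Λ(J) be a point whose stabilizer Stab_G(z) contains no loxodromic element and which is a bounded parabolic point of both H and J. Then there exists a compact subset C ⊆ M \ {z} such that (Λ(H) ∩ Λ(J)) \ {z} ⊆ P·C, where P = Stab_H(z) ∩ Stab_J(z). -/

import Mathlib

open Pointwise Filter Topology Set

section ConvergenceGroups

variable (G M : Type*) [Group G] [TopologicalSpace M] [MulAction G M]

/-- A convergence group action: the action is by homeomorphisms (each element acts
continuously, hence as a homeomorphism since the action is by a group), and the induced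
diagonal action on the space of distinct triples of points of `M` is properly
discontinuous. -/
def IsConvergenceAction : Prop :=
  (∀ g : G, Continuous fun x : M => g • x) ∧
    ∀ K L : Set (M × M × M), IsCompact K → IsCompact L →
      (∀ t ∈ K ∪ L, t.1 ≠ t.2.1 ∧ t.1 ≠ t.2.2 ∧ t.2.1 ≠ t.2.2) →
      {g : G | ((g • K) ∩ L).Nonempty}.Finite

/-- The limit set of a subgroup `H ≤ G`: the set of accumulation points in `M` of
the `H`-orbits of points of `M`. -/
def limitSet (H : Subgroup G) : Set M :=
  {x : M | ∃ m : M, x ∈ closure (((fun h : G => h • m) '' (H : Set G)) \ {x})}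

/-- `z` is a conical limit point of the subgroup `H`. -/
def IsConicalLimitPoint (H : Subgroup G) (z : M) : Prop :=
  ∃ (h : ℕ → G) (a b : M), (∀ n, h n ∈ H) ∧ a ≠ b ∧
    Tendsto (fun n => h n • z) atTop (nhds a) ∧
    ∀ q : M, q ≠ z → Tendsto (fun n => h n • q) atTop (nhds b)

/-- `g` is loxodromic: it has infinite order and fixes exactly two points of `M`. -/
def IsLoxodromic (g : G) : Prop :=
  ¬ IsOfFinOrder g ∧ {x : M | g • x = x}.encard = 2

/-- `p` is a bounded parabolic point of the subgroup `H`: its stabilizer in `H` is an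
infinite subgroup containing no loxodromic element, which acts cocompactly on
`Λ(H) \ {p}`. -/
def IsBoundedParabolicPoint (H : Subgroup G) (p : M) : Prop :=
  ((H ⊓ MulAction.stabilizer G p : Subgroup G) : Set G).Infinite ∧
  (∀ g ∈ H ⊓ MulAction.stabilizer G p, ¬ IsLoxodromic G M g) ∧
  ∃ C : Set M, IsCompact C ∧ C ⊆ limitSet G M H \ {p} ∧
    limitSet G M H \ {p} ⊆ ⋃ g ∈ (H ⊓ MulAction.stabilizer G p : Subgroup G), g • C

/-- `H` is dynamically quasiconvex: for every pair of disjoint closed subsets `K, L` of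
`M`, the set of cosets `gH` with `gΛ(H)` meeting both `K` and `L` is finite. -/
def DynamicallyQuasiconvex (H : Subgroup G) : Prop :=
  ∀ K L : Set M, IsClosed K → IsClosed L → Disjoint K L →
    ((fun g : G => (g : G ⧸ H)) ''
      {g : G | ((g • limitSet G M H) ∩ K).Nonempty ∧
               ((g • limitSet G M H) ∩ L).Nonempty}).Finite

end ConvergenceGroups

/-!
Write `x ∈ (Λ(H) ∩ Λ(J)) \ {z}` as `x = q • u = r • w` with `q ∈ Stab_H(z)`, `u ∈ C_H`,
`r ∈ Stab_J(z)`, `w ∈ C_J`, where `C_H`, `C_J` are the compact sets given by bounded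
parabolicity. Then `q⁻¹ r ∈ Stab_G(z)` moves `C_J` to meet `C_H`, and only finitely many elements
of `Stab_G(z)` do so; for each of them the admissible `q` form one right coset of `P`, so
finitely many translates of `C_H` make up `C`.

The finiteness is properness of the action of `Stab_G(z)` on `M \ {z}`. Elements of `Stab_G(z)`
going to infinity along an ultrafilter and carrying points near `c ≠ z` to points near `d ≠ z`
send every other point towards `z` or `d`. Tracking a generic point under these elements and their
inverses, proper discontinuity on triples leaves only the case where they attract towards `d`
(or, for the inverses, towards `c`) and repel from `z`; then some of them map a small closed ball
around `d` into itself, which makes them loxodromic.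
-/

theorem Ultrafilter.exists_tendsto_nhds {ι X : Type*} [TopologicalSpace X] [CompactSpace X]
    (l : Ultrafilter ι) (f : ι → X) : ∃ p, Tendsto f l (𝓝 p) :=
  ⟨_, (l.map f).le_nhds_lim⟩

theorem tendsto_pow_hyperfilter_cofinite {G : Type*} [Group G] {γ : G} (hγ : ¬IsOfFinOrder γ) :
    Tendsto (γ ^ · : ℕ → G) (hyperfilter ℕ) cofinite :=
  (injective_pow_iff_not_isOfFinOrder.2 hγ).tendsto_cofinite.mono_left hyperfilter_le_cofinite

theorem pow_smul_eq_of_smul_eq {G M : Type*} [Group G] [MulAction G M] {γ : G} {x : M}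
    (h : γ • x = x) (n : ℕ) : γ ^ n • x = x :=
  MulAction.mem_stabilizer_iff.1 (pow_mem (MulAction.mem_stabilizer_iff.2 h) n)

section Topological

variable {G M : Type*} [Group G] [TopologicalSpace M] [MulAction G M]

theorem tendsto_smul_of_forall_smul_eq {ι : Type*} {l : Filter ι} {g : ι → G} {z : M}
    (h : ∀ i, g i • z = z) : Tendsto (fun i => g i • z) l (𝓝 z) :=
  tendsto_const_nhds.congr fun i => (h i).symm

namespace IsConvergenceAction

theorem continuousConstSMul (hconv : IsConvergenceAction G M) : ContinuousConstSMul G M :=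
  ⟨hconv.1⟩

theorem infinite [Infinite G] (hconv : IsConvergenceAction G M)
    (h3 : ∃ a b c : M, a ≠ b ∧ a ≠ c ∧ b ≠ c) : Infinite M := by
  by_contra hfin
  have : Finite M := not_infinite_iff_finite.mp hfin
  obtain ⟨a, b, c, hab, hac, hbc⟩ := h3
  set T : Set (M × M × M) := {t | t.1 ≠ t.2.1 ∧ t.1 ≠ t.2.2 ∧ t.2.1 ≠ t.2.2}
  have hT : IsCompact T := T.toFinite.isCompact
  refine Set.infinite_univ ((hconv.2 T T hT hT fun t ht => ht.elim id id).subset fun g _ => ?_)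
  have hg : Function.Injective (g • · : M → M) := MulAction.injective g
  exact ⟨g • (a, b, c), Set.smul_mem_smul_set ⟨hab, hac, hbc⟩, hg.ne hab, hg.ne hac, hg.ne hbc⟩

/-- Proper discontinuity on triples, along a filter: elements of `G` going to infinity cannot
carry a convergent family of triples with distinct limits to another such family. -/
theorem false_of_tendsto [T2Space M] [LocallyCompactSpace M]
    (hconv : IsConvergenceAction G M) {ι : Type*} {l : Filter ι} [l.NeBot] {g : ι → G}
    (hg : Tendsto g l cofinite) {a b e : ι → M} {a₀ b₀ e₀ a₁ b₁ e₁ : M}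
    (ha : Tendsto a l (𝓝 a₀)) (hb : Tendsto b l (𝓝 b₀)) (he : Tendsto e l (𝓝 e₀))
    (hga : Tendsto (fun i => g i • a i) l (𝓝 a₁)) (hgb : Tendsto (fun i => g i • b i) l (𝓝 b₁))
    (hge : Tendsto (fun i => g i • e i) l (𝓝 e₁))
    (h₀ : a₀ ≠ b₀ ∧ a₀ ≠ e₀ ∧ b₀ ≠ e₀) (h₁ : a₁ ≠ b₁ ∧ a₁ ≠ e₁ ∧ b₁ ≠ e₁) : False := by
  set D : Set (M × M × M) := {t | t.1 ≠ t.2.1 ∧ t.1 ≠ t.2.2 ∧ t.2.1 ≠ t.2.2}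
  have hD : IsOpen D :=
    (isOpen_ne_fun continuous_fst (continuous_fst.comp continuous_snd)).inter <|
      (isOpen_ne_fun continuous_fst (continuous_snd.comp continuous_snd)).inter
        (isOpen_ne_fun (continuous_fst.comp continuous_snd) (continuous_snd.comp continuous_snd))
  obtain ⟨K, hK, hKD, hKc⟩ :=
    LocallyCompactSpace.local_compact_nhds _ _ (hD.mem_nhds (show (a₀, b₀, e₀) ∈ D from h₀))
  obtain ⟨L, hL, hLD, hLc⟩ :=
    LocallyCompactSpace.local_compact_nhds _ _ (hD.mem_nhds (show (a₁, b₁, e₁) ∈ D from h₁))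
  have hfin := hconv.2 K L hKc hLc fun t ht => ht.elim (fun h => hKD h) (fun h => hLD h)
  have hK' := (ha.prodMk_nhds (hb.prodMk_nhds he)).eventually_mem hK
  have hL' := (hga.prodMk_nhds (hgb.prodMk_nhds hge)).eventually_mem hL
  obtain ⟨i, hiK, hiL, hi⟩ :=
    (hK'.and (hL'.and (hg.eventually_mem hfin.compl_mem_cofinite))).exists
  exact hi ⟨_, Set.smul_mem_smul_set hiK, hiL⟩

theorem eq_or_eq_of_tendsto [T2Space M] [LocallyCompactSpace M]
    (hconv : IsConvergenceAction G M) {ι : Type*} {l : Filter ι} [l.NeBot] {g : ι → G}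
    (hg : Tendsto g l cofinite) {z : M} (hgz : ∀ i, g i • z = z) {c u : ι → M} {c₀ d u₀ q : M}
    (hc : Tendsto c l (𝓝 c₀)) (hd : Tendsto (fun i => g i • c i) l (𝓝 d))
    (hu : Tendsto u l (𝓝 u₀)) (hq : Tendsto (fun i => g i • u i) l (𝓝 q))
    (hc₀z : c₀ ≠ z) (hdz : d ≠ z) (hu₀z : u₀ ≠ z) (hu₀c₀ : u₀ ≠ c₀) : q = z ∨ q = d := by
  by_contra! h
  exact hconv.false_of_tendsto hg tendsto_const_nhds hc hu (tendsto_smul_of_forall_smul_eq hgz)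
    hd hq ⟨hc₀z.symm, hu₀z.symm, hu₀c₀.symm⟩ ⟨hdz.symm, h.1.symm, h.2.symm⟩

theorem subsingleton_of_pow_smul_mem [T2Space M] [CompactSpace M]
    (hconv : IsConvergenceAction G M) {γ : G} (hγ : ¬IsOfFinOrder γ) {z : M} (hγz : γ • z = z)
    {A : Set M} (hA : IsClosed A) (hzA : z ∉ A)
    (hAγ : ∀ n : ℕ, ∀ a ∈ A, γ ^ n • a ∈ A ∧ (γ ^ n)⁻¹ • a ∈ A) : A.Subsingleton := by
  by_contra hA₂
  obtain ⟨a₁, ha₁⟩ := (Set.not_subsingleton_iff.1 hA₂).nonempty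
  set l := hyperfilter ℕ
  have hpowz := pow_smul_eq_of_smul_eq hγz
  have hne : ∀ x ∈ A, x ≠ z := fun x hx => ne_of_mem_of_not_mem hx hzA
  have hlim : ∀ g : ℕ → G, Tendsto g l cofinite → (∀ n, g n • z = z) →
      (∀ n, ∀ a ∈ A, g n • a ∈ A) → ∃ p ∈ A, ∀ a ∈ A, Tendsto (fun n => g n • a) l (𝓝 p) := by
    intro g hg hgz hgA
    obtain ⟨p, hp⟩ := l.exists_tendsto_nhds fun n => g n • a₁
    have hpA : p ∈ A := hA.mem_of_tendsto hp (.of_forall fun n => hgA n a₁ ha₁)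
    refine ⟨p, hpA, fun a ha => ?_⟩
    rcases eq_or_ne a a₁ with rfl | haa₁
    · exact hp
    obtain ⟨q, hq⟩ := l.exists_tendsto_nhds fun n => g n • a
    have hqA : q ∈ A := hA.mem_of_tendsto hq (.of_forall fun n => hgA n a ha)
    obtain hqz | rfl := hconv.eq_or_eq_of_tendsto hg hgz tendsto_const_nhds hp tendsto_const_nhds
      hq (hne a₁ ha₁) (hne p hpA) (hne a ha) haa₁
    · exact absurd hqz (hne q hqA)
    · exact hq
  have hg := tendsto_pow_hyperfilter_cofinite hγ
  obtain ⟨p, hpA, hp⟩ := hlim _ hg hpowz fun n a ha => (hAγ n a ha).1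
  obtain ⟨q, hqA, hq⟩ := hlim _ (inv_injective.tendsto_cofinite.comp hg)
    (fun n => inv_smul_eq_iff.2 (hpowz n).symm) fun n a ha => (hAγ n a ha).2
  obtain ⟨a, haA, hap⟩ := (Set.not_subsingleton_iff.1 hA₂).exists_ne p
  obtain ⟨b, hbA, hbq⟩ := (Set.not_subsingleton_iff.1 hA₂).exists_ne q
  exact hconv.false_of_tendsto hg tendsto_const_nhds (hq a haA) tendsto_const_nhds
    (tendsto_smul_of_forall_smul_eq hpowz)
    (tendsto_const_nhds.congr fun n => (smul_inv_smul _ a).symm) (hp b hbA)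
    ⟨(hne q hqA).symm, (hne b hbA).symm, hbq.symm⟩ ⟨(hne a haA).symm, (hne p hpA).symm, hap⟩

/-- The second fixed point is the unique point of `⋂ n, γ ^ n • U`. -/
theorem isLoxodromic_of_smul_subset [T2Space M] [CompactSpace M]
    (hconv : IsConvergenceAction G M) {γ : G} {z m : M} {U : Set M} (hγz : γ • z = z)
    (hU : IsClosed U) (hzU : z ∉ U) (hγU : γ • U ⊆ U) (hm : m ∉ U) (hγm : γ • m ∈ U) :
    IsLoxodromic G M γ := by
  have := hconv.continuousConstSMul
  have hpowU : ∀ n : ℕ, γ ^ n • U ⊆ U := by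
    intro n
    induction n with
    | zero => simp
    | succ n ih => rw [pow_succ, mul_smul]; exact (Set.smul_set_mono hγU).trans ih
  have hγ : ¬IsOfFinOrder γ := by
    intro hfin
    obtain ⟨n, hn, hγn⟩ := hfin.exists_pow_eq_one
    obtain ⟨k, rfl⟩ := Nat.exists_eq_add_one_of_ne_zero hn.ne'
    have h := hpowU k (Set.smul_mem_smul_set (a := γ ^ k) hγm)
    rw [← mul_smul, ← pow_succ, hγn, one_smul] at h
    exact hm h
  set A := ⋂ k : ℕ, γ ^ k • U
  have hA : IsClosed A := isClosed_iInter fun k => hU.smul _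
  have hAU : A ⊆ U := fun a ha => by simpa using Set.mem_iInter.1 ha 0
  have hAγ : ∀ n : ℕ, ∀ a ∈ A, γ ^ n • a ∈ A ∧ (γ ^ n)⁻¹ • a ∈ A := by
    intro n a ha
    simp only [A, Set.mem_iInter] at ha ⊢
    refine ⟨fun k => ?_, fun k => ?_⟩
    · have h := Set.smul_mem_smul_set (a := γ ^ n) (ha k)
      rw [smul_smul, pow_mul_comm, mul_smul] at h
      exact Set.smul_set_mono (hpowU n) h
    · have h := ha (n + k)
      rw [pow_add, mul_smul] at h
      exact Set.mem_smul_set_iff_inv_smul_mem.1 h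
  obtain ⟨a, haA⟩ : A.Nonempty :=
    IsCompact.nonempty_iInter_of_sequence_nonempty_isCompact_isClosed _
      (fun k => by rw [pow_succ, mul_smul]; exact Set.smul_set_mono hγU)
      (fun k => ⟨_, Set.smul_mem_smul_set hγm⟩) (hU.smul _).isCompact fun k => hU.smul _
  have hA₁ : A = {a} := (hconv.subsingleton_of_pow_smul_mem hγ hγz hA (fun h => hzU (hAU h))
    hAγ).eq_singleton_of_mem haA
  have hγa : γ • a = a := by simpa [hA₁] using (hAγ 1 a haA).1
  have haz : a ≠ z := ne_of_mem_of_not_mem (hAU haA) hzU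
  have hfix : {x | γ • x = x} = {z, a} := by
    ext w
    simp only [Set.mem_ofPred_eq, Set.mem_insert_iff, Set.mem_singleton_iff]
    refine ⟨fun hw => ?_, by rintro (rfl | rfl) <;> assumption⟩
    by_contra! h
    exact h.1 ((hconv.eq_or_eq_of_tendsto (tendsto_pow_hyperfilter_cofinite hγ)
      (pow_smul_eq_of_smul_eq hγz) tendsto_const_nhds
      (tendsto_smul_of_forall_smul_eq (pow_smul_eq_of_smul_eq hγa)) tendsto_const_nhds
      (tendsto_smul_of_forall_smul_eq (pow_smul_eq_of_smul_eq hw)) haz haz h.1 h.2).resolve_right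
        h.2)
  exact ⟨hγ, by rw [hfix, Set.encard_pair haz.symm]⟩

end IsConvergenceAction

end Topological

section Metric

variable {G M : Type*} [Group G] [MetricSpace M] [CompactSpace M] [MulAction G M]

namespace IsConvergenceAction

/-- Otherwise `γ` would map a small closed ball around `d` into itself and `m` into that ball. -/
theorem exists_uniform_escape (hconv : IsConvergenceAction G M) {z d m : M} (hdz : d ≠ z)
    (hmz : m ≠ z) (hmd : m ≠ d) :
    ∃ r > 0, ∀ γ : G, γ • z = z → ¬IsLoxodromic G M γ →
      ∃ x, r ≤ dist x z ∧ r ≤ dist (γ • x) d := by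
  obtain ⟨r, hr, hdzr, hmzr, hmdr⟩ :
      ∃ r > 0, 2 * r ≤ dist d z ∧ r ≤ dist m z ∧ r < dist m d := by
    set μ := min (dist d z) (min (dist m z) (dist m d))
    have hμ : 0 < μ := lt_min (dist_pos.2 hdz) (lt_min (dist_pos.2 hmz) (dist_pos.2 hmd))
    have h₁ : μ ≤ dist d z := min_le_left _ _
    have h₂ : μ ≤ dist m z := (min_le_right _ _).trans (min_le_left _ _)
    have h₃ : μ ≤ dist m d := (min_le_right _ _).trans (min_le_right _ _)
    exact ⟨μ / 2, half_pos hμ, by linarith, by linarith, by linarith⟩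
  refine ⟨r, hr, fun γ hγz hγ => ?_⟩
  by_contra! hnear
  refine hγ (hconv.isLoxodromic_of_smul_subset hγz Metric.isClosed_closedBall (m := m) ?_ ?_ ?_
    (Metric.mem_closedBall.2 (hnear m hmzr).le))
  · rw [Metric.mem_closedBall, dist_comm]
    linarith
  · rintro _ ⟨x, hx, rfl⟩
    rw [Metric.mem_closedBall] at hx ⊢
    exact (hnear x (by linarith [dist_triangle_left d z x])).le
  · rw [Metric.mem_closedBall]
    linarith

theorem exists_tendsto_escape [Infinite M] (hconv : IsConvergenceAction G M) {z d : M}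
    (hdz : d ≠ z) {ι : Type*} (l : Ultrafilter ι) {g : ι → G} (hgz : ∀ i, g i • z = z)
    (hlox : ∀ i, ¬IsLoxodromic G M (g i)) :
    ∃ (x : ι → M) (x₀ t : M), Tendsto x l (𝓝 x₀) ∧ Tendsto (fun i => g i • x i) l (𝓝 t) ∧
      x₀ ≠ z ∧ t ≠ d := by
  classical
  obtain ⟨m, hm⟩ := Infinite.exists_notMem_finset ({z, d} : Finset M)
  simp only [Finset.mem_insert, Finset.mem_singleton, not_or] at hm
  obtain ⟨r, hr, hesc⟩ := hconv.exists_uniform_escape hdz hm.1 hm.2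
  choose x hxz hxd using fun i => hesc (g i) (hgz i) (hlox i)
  obtain ⟨x₀, hx₀⟩ := l.exists_tendsto_nhds x
  obtain ⟨t, ht⟩ := l.exists_tendsto_nhds fun i => g i • x i
  exact ⟨x, x₀, t, hx₀, ht,
    dist_pos.1 (hr.trans_le (ge_of_tendsto' (hx₀.dist tendsto_const_nhds) hxz)),
    dist_pos.1 (hr.trans_le (ge_of_tendsto' (ht.dist tendsto_const_nhds) hxd))⟩

theorem false_of_tendsto_of_forall_smul_eq [Infinite M] (hconv : IsConvergenceAction G M)
    {z : M} (hnolox : ∀ g ∈ MulAction.stabilizer G z, ¬IsLoxodromic G M g) {ι : Type*}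
    (l : Ultrafilter ι) {g : ι → G} (hg : Tendsto g l cofinite) (hgz : ∀ i, g i • z = z)
    {c : ι → M} {c₀ d : M} (hc : Tendsto c l (𝓝 c₀))
    (hd : Tendsto (fun i => g i • c i) l (𝓝 d)) (hc₀z : c₀ ≠ z) (hdz : d ≠ z) : False := by
  classical
  have hg' : Tendsto (fun i => (g i)⁻¹) l cofinite := inv_injective.tendsto_cofinite.comp hg
  have hgz' : ∀ i, (g i)⁻¹ • z = z := fun i => inv_smul_eq_iff.2 (hgz i).symm
  have hc' : Tendsto (fun i => (g i)⁻¹ • g i • c i) l (𝓝 c₀) := by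
    simpa only [inv_smul_smul] using hc
  obtain ⟨x, x₀, t, hx, hgx, hx₀z, htd⟩ :=
    hconv.exists_tendsto_escape hdz l hgz fun i => hnolox _ (hgz i)
  obtain ⟨y, y₀, s, hy, hgy, hy₀z, hsc₀⟩ :=
    hconv.exists_tendsto_escape hc₀z l hgz' fun i => hnolox _ (hgz' i)
  obtain ⟨v, hv⟩ := Infinite.exists_notMem_finset ({z, c₀, d, x₀, t, y₀, s} : Finset M)
  simp only [Finset.mem_insert, Finset.mem_singleton, not_or] at hv
  obtain ⟨hvz, hvc₀, hvd, hvx₀, hvt, hvy₀, hvs⟩ := hv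
  have hv₁ : Tendsto (fun i => g i • (g i)⁻¹ • v) l (𝓝 v) :=
    tendsto_const_nhds.congr fun i => (smul_inv_smul _ v).symm
  have hv₂ : Tendsto (fun i => (g i)⁻¹ • g i • v) l (𝓝 v) :=
    tendsto_const_nhds.congr fun i => (inv_smul_smul _ v).symm
  obtain ⟨τ, hτ⟩ := l.exists_tendsto_nhds fun i => g i • v
  obtain ⟨σ, hσ⟩ := l.exists_tendsto_nhds fun i => (g i)⁻¹ • v
  -- each of the four possible pairs `(τ, σ)` yields two families of distinct triples
  rcases hconv.eq_or_eq_of_tendsto hg hgz hc hd tendsto_const_nhds hτ hc₀z hdz hvz hvc₀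
    with rfl | rfl <;>
  rcases hconv.eq_or_eq_of_tendsto hg' hgz' hd hc' tendsto_const_nhds hσ hdz hc₀z hvz hvd
    with rfl | rfl
  · exact hconv.false_of_tendsto hg hc hσ tendsto_const_nhds hd hv₁ hτ (by grind) (by grind)
  · exact hconv.false_of_tendsto hg' hy hτ tendsto_const_nhds hgy hv₂ hσ (by grind) (by grind)
  · exact hconv.false_of_tendsto hg hx hσ tendsto_const_nhds hgx hv₁ hτ (by grind) (by grind)
  · exact hconv.false_of_tendsto hg tendsto_const_nhds hσ tendsto_const_nhds
      (tendsto_smul_of_forall_smul_eq hgz) hv₁ hτ (by grind) (by grind)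

theorem finite_setOf_smul_inter_nonempty (hconv : IsConvergenceAction G M)
    (h3 : ∃ a b c : M, a ≠ b ∧ a ≠ c ∧ b ≠ c) {z : M}
    (hnolox : ∀ g ∈ MulAction.stabilizer G z, ¬IsLoxodromic G M g) {K L : Set M}
    (hK : IsCompact K) (hL : IsCompact L) (hzK : z ∉ K) (hzL : z ∉ L) :
    {f : G | f ∈ MulAction.stabilizer G z ∧ (f • K ∩ L).Nonempty}.Finite := by
  by_contra hinf
  set F := {f : G | f ∈ MulAction.stabilizer G z ∧ (f • K ∩ L).Nonempty}
  have : Infinite F := (Set.infinite_coe_iff (s := F)).2 hinf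
  have : Infinite G := Infinite.of_injective (Subtype.val : F → G) Subtype.val_injective
  have : Infinite M := hconv.infinite h3
  have hF : ∀ f : F, ∃ x ∈ K, (f : G) • x ∈ L := fun f => by
    obtain ⟨_, ⟨x, hx, rfl⟩, hfx⟩ := f.2.2
    exact ⟨x, hx, hfx⟩
  choose c hcK hcL using hF
  obtain ⟨c₀, hc₀⟩ := (hyperfilter F).exists_tendsto_nhds c
  obtain ⟨d, hd⟩ := (hyperfilter F).exists_tendsto_nhds fun f => (f : G) • c f
  exact hconv.false_of_tendsto_of_forall_smul_eq hnolox (hyperfilter F)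
    (Subtype.val_injective.tendsto_cofinite.mono_left hyperfilter_le_cofinite) (fun f => f.2.1)
    hc₀ hd
    (ne_of_mem_of_not_mem (hK.isClosed.mem_of_tendsto hc₀ (.of_forall hcK)) hzK)
    (ne_of_mem_of_not_mem (hL.isClosed.mem_of_tendsto hd (.of_forall hcL)) hzL)

end IsConvergenceAction

end Metric

theorem Subgroup.exists_finite_subset_mul_inv_mem_inf {G : Type*} [Group G] (Q R : Subgroup G)
    {F : Set G} (hF : F.Finite) :
    ∃ T : Set G, T.Finite ∧ T ⊆ Q ∧
      ∀ q ∈ Q, ∀ f ∈ F, q * f ∈ R → ∃ t ∈ T, q * t⁻¹ ∈ Q ⊓ R := by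
  have hrep : ∀ f : G, ∃ t ∈ Q, ∀ q ∈ Q, q * f ∈ R → t * f ∈ R := fun f => by
    by_cases h : ∃ q ∈ Q, q * f ∈ R
    · obtain ⟨q, hq, hqf⟩ := h
      exact ⟨q, hq, fun _ _ _ => hqf⟩
    · push Not at h
      exact ⟨1, one_mem _, fun q hq hqf => absurd hqf (h q hq)⟩
  choose t htQ htR using hrep
  refine ⟨t '' F, hF.image t, Set.image_subset_iff.2 fun f _ => htQ f,
    fun q hq f hf hqf =>
      ⟨t f, ⟨f, hf, rfl⟩, Subgroup.mem_inf.2 ⟨mul_mem hq (inv_mem (htQ f)), ?_⟩⟩⟩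
  simpa [mul_assoc] using mul_mem hqf (inv_mem (htR f q hq hqf))

theorem cocompact_on_limit_set_intersection_general
    {G M : Type*} [Group G] [TopologicalSpace M] [CompactSpace M]
    [TopologicalSpace.MetrizableSpace M] [MulAction G M]
    (hconv : IsConvergenceAction G M)
    (h3 : ∃ a b c : M, a ≠ b ∧ a ≠ c ∧ b ≠ c)
    (H J : Subgroup G)
    (z : M)
    (hnolox : ∀ g ∈ MulAction.stabilizer G z, ¬ IsLoxodromic G M g)
    (hbpH : IsBoundedParabolicPoint G M H z)
    (hbpJ : IsBoundedParabolicPoint G M J z) :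
    ∃ C : Set M, IsCompact C ∧ C ⊆ {z}ᶜ ∧
      (limitSet G M H ∩ limitSet G M J) \ {z} ⊆
        ⋃ g ∈ ((H ⊓ MulAction.stabilizer G z) ⊓ (J ⊓ MulAction.stabilizer G z) :
          Subgroup G), g • C := by
  let _ : MetricSpace M := TopologicalSpace.metrizableSpaceMetric M
  have := hconv.continuousConstSMul
  obtain ⟨-, -, CH, hCH, hCHsub, hCHcov⟩ := hbpH
  obtain ⟨-, -, CJ, hCJ, hCJsub, hCJcov⟩ := hbpJ
  have hzCH : z ∉ CH := fun h => (hCHsub h).2 rfl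
  have hzCJ : z ∉ CJ := fun h => (hCJsub h).2 rfl
  obtain ⟨T, hT, hTH, hTcov⟩ := Subgroup.exists_finite_subset_mul_inv_mem_inf
    (H ⊓ MulAction.stabilizer G z) (J ⊓ MulAction.stabilizer G z)
    (hconv.finite_setOf_smul_inter_nonempty h3 hnolox hCJ hCH hzCJ hzCH)
  refine ⟨⋃ t ∈ T, t • CH, hT.isCompact_biUnion fun t _ => hCH.smul t, ?_, ?_⟩
  · simp only [Set.iUnion_subset_iff]
    rintro t ht _ ⟨u, hu, rfl⟩ (htu : t • u = z)
    exact hzCH (MulAction.injective t (htu.trans (hTH ht).2.symm) ▸ hu)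
  · rintro x ⟨⟨hxH, hxJ⟩, hxz⟩
    obtain ⟨q, hq, u, hu, rfl⟩ := Set.mem_iUnion₂.1 (hCHcov ⟨hxH, hxz⟩)
    obtain ⟨r, hr, w, hw, hrw⟩ := Set.mem_iUnion₂.1 (hCJcov ⟨hxJ, hxz⟩)
    obtain ⟨t, ht, hqt⟩ := hTcov q hq (q⁻¹ * r)
      ⟨mul_mem (inv_mem hq.2) hr.2, u,
        ⟨w, hw, by beta_reduce at hrw ⊢; rw [mul_smul, hrw, inv_smul_smul]⟩, hu⟩
      (by simpa using hr)
    exact Set.mem_iUnion₂.2 ⟨q * t⁻¹, hqt, t • u, Set.mem_biUnion ht (Set.smul_mem_smul_set hu),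
      by beta_reduce; rw [smul_smul, inv_mul_cancel_right]⟩

/-- if `z ∈ Λ(H) ∩ Λ(J)` is a bounded parabolic point of two infinite
subgroups `H` and `J` and `Stab_G(z)` contains no loxodromic element, then there is a
compact `C ⊆ M \ {z}` with `(Λ(H) ∩ Λ(J)) \ {z} ⊆ P ⬝ C`, where
`P = Stab_H(z) ∩ Stab_J(z)`. -/
theorem cocompact_on_limit_set_intersection
    {G M : Type*} [Group G] [TopologicalSpace M] [CompactSpace M]
    [TopologicalSpace.MetrizableSpace M] [MulAction G M]
    (hconv : IsConvergenceAction G M)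
    (h3 : ∃ a b c : M, a ≠ b ∧ a ≠ c ∧ b ≠ c)
    (H J : Subgroup G)
    (hHinf : (H : Set G).Infinite) (hJinf : (J : Set G).Infinite)
    (z : M) (hz : z ∈ limitSet G M H ∩ limitSet G M J)
    (hnolox : ∀ g ∈ MulAction.stabilizer G z, ¬ IsLoxodromic G M g)
    (hbpH : IsBoundedParabolicPoint G M H z)
    (hbpJ : IsBoundedParabolicPoint G M J z) :
    ∃ C : Set M, IsCompact C ∧ C ⊆ {z}ᶜ ∧
      (limitSet G M H ∩ limitSet G M J) \ {z} ⊆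
        ⋃ g ∈ ((H ⊓ MulAction.stabilizer G z) ⊓ (J ⊓ MulAction.stabilizer G z) :
          Subgroup G), g • C :=
  cocompact_on_limit_set_intersection_general hconv h3 H J z hnolox hbpH hbpJ
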